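/- arXiv:1404.0900 — 11 statements merged into one kernel-verified Lean document; each statement's English description precedes it below -/
import Mathlib

section
/- Let R be a random RR set (generated for a uniformly random node v on an independently sampled edge-percolated subgraph of G), and for a node set S let F(S) be the indicator that S intersects R. Then n · E[F(S)] = E[I(S)], where I(S) is the number of nodes activated by seed set S in the independent cascade process on G and n is the number of nodes of G. -/
/-!
Sample the percolated subgraph `ω` first and the target node `v` second (Fubini). For fixed `ω`,
`S` meets the RR set of `v` exactly when `v` is reachable from `S`, so averaging the indicator over
the uniform `v` gives `I(S)(ω) / n`.
-/

open MeasureTheory ProbabilityTheory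
open scoped Classical

theorem card_mul_integral_uniformOfFintype {α : Type*} [Fintype α] [Nonempty α]
    [MeasurableSpace α] [MeasurableSingletonClass α] (f : α → ℝ) :
    (Fintype.card α : ℝ) * ∫ a, f a ∂(PMF.uniformOfFintype α).toMeasure = ∑ a, f a := by
  have h_singleton (a : α) :
      (PMF.uniformOfFintype α).toMeasure.real {a} = (Fintype.card α : ℝ)⁻¹ := by
    simp [Measure.real, PMF.toMeasure_apply_singleton _ _ (measurableSet_singleton a)]
  rw [integral_fintype .of_finite]
  simp only [h_singleton, smul_eq_mul, ← Finset.mul_sum, ← mul_assoc]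
  rw [mul_inv_cancel₀ (by positivity), one_mul]

theorem card_mul_integral_prod_uniformOfFintype {Ω α : Type*} [MeasurableSpace Ω]
    [Fintype α] [Nonempty α] [MeasurableSpace α] [MeasurableSingletonClass α]
    {μ : Measure Ω} [SFinite μ] {f : Ω × α → ℝ}
    (hf : Integrable f (μ.prod (PMF.uniformOfFintype α).toMeasure)) :
    (Fintype.card α : ℝ) * ∫ p, f p ∂(μ.prod (PMF.uniformOfFintype α).toMeasure)
      = ∫ ω, ∑ a, f (ω, a) ∂μ := by
  rw [integral_prod f hf, ← integral_const_mul]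
  exact integral_congr_ae (.of_forall fun ω => card_mul_integral_uniformOfFintype _)

theorem sum_ite_inter_nonempty_eq_card_filter {V : Type*} [Fintype V]
    (R : V → V → Prop) (S : Set V) :
    ∑ v, (if (S ∩ {u | R u v}).Nonempty then (1 : ℝ) else 0)
      = (Finset.univ.filter (fun v => ∃ u ∈ S, R u v)).card := by
  simp only [Set.inter_nonempty, Set.mem_ofPred_eq, Finset.sum_boole]

/-- Corollary 1 of Tang–Xiao–Shi: `n · E[F(S)] = E[I(S)]`, where `F(S)` is the indicator that
`S` intersects a random RR set (generated for a uniformly random node `v` on an edge-percolated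
subgraph of `G`), and `I(S)` is the number of nodes activated by seed set `S` in the independent
cascade process, i.e. the number of nodes reachable from `S` in the percolated subgraph. -/
theorem n_mul_expected_coverage_eq_expected_spread
    {V : Type*} [Fintype V] [Nonempty V] [MeasurableSpace V] [MeasurableSingletonClass V]
    (E : V → V → Prop)
    (μ : Measure (V → V → Bool)) [IsProbabilityMeasure μ]
    (S : Set V) :
    (Fintype.card V : ℝ) *
      ∫ x, (if (S ∩ {u | Relation.ReflTransGen
              (fun a b => E a b ∧ x.1 a b = true) u x.2}).Nonempty then (1:ℝ) else 0)
        ∂(μ.prod (PMF.uniformOfFintype V).toMeasure)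
    = ∫ ω, ((Finset.univ.filter (fun v : V => ∃ u ∈ S,
          Relation.ReflTransGen (fun a b => E a b ∧ ω a b = true) u v)).card : ℝ) ∂μ := by
  rw [card_mul_integral_prod_uniformOfFintype .of_finite]
  simp only [sum_ite_inter_nonempty_eq_card_filter]
end

section
/- Let θ ≥ (8+2ε)·n·(ℓ log n + log C(n,k) + log 2)/(OPT·ε²), where OPT is the maximum of E[I(S)] over all size-k node sets S. Let R₁,…,R_θ be i.i.d. random RR sets and, for a node set S with |S| ≤ k, let F_R(S) be the fraction of the θ RR sets intersecting S. Then Pr[|n·F_R(S) − E[I(S)]| ≥ (ε/2)·OPT] ≤ n^{−ℓ}/C(n,k). -/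
/-!
Multiplicative Chernoff bound. For independent Bernoulli(p) variables the moment generating
function of their sum `S` is at most `exp (θ p (eᵗ - 1))`, so Markov's inequality applied to
`exp (±t S)` with `t = 2δ / (2p + δ)` bounds each tail of `|S - θp| ≥ θδ` by
`exp (-θ δ² / (2p + δ))`. This `t` (rather than the optimal `log (1 + δ/p)`) needs no case split
at `p = 0`, and the Padé bound `exp t ≤ (2 + t) / (2 - t)` makes it give the same exponent.
With `p = E[I(S)]/n` and `δ = (ε/2) OPT / n` the hypothesis on `θ` makes that exponent at least
`ℓ log n + log C(n,k) + log 2`.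
-/

open MeasureTheory ProbabilityTheory Real

lemma exp_le_one_add_add_sq_div_two_of_nonpos {x : ℝ} (hx : x ≤ 0) :
    exp x ≤ 1 + x + x ^ 2 / 2 := by
  have hexp := sum_le_exp_of_nonneg (neg_nonneg.mpr hx) 4
  simp only [Finset.sum_range_succ, Finset.sum_range_zero, Nat.factorial] at hexp
  have hpos := exp_pos (-x)
  rw [← mul_le_mul_iff_left₀ hpos, ← exp_add, add_neg_cancel, exp_zero]
  have hq : 0 ≤ 1 + x + x ^ 2 / 2 := by nlinarith [sq_nonneg (x + 1)]
  have hy : 0 ≤ -x := neg_nonneg.mpr hx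
  nlinarith [mul_le_mul_of_nonneg_left hexp hq, pow_nonneg hy 3, pow_nonneg hy 4, pow_nonneg hy 5]

lemma mul_exp_two_mul_div_le {p δ : ℝ} (hp : 0 ≤ p) (hδ : 0 < δ) :
    p * exp (2 * δ / (2 * p + δ)) ≤ p + δ := by
  obtain rfl | hp := hp.eq_or_lt
  · simpa using hδ.le
  have hs : 0 < 2 * p + δ := by positivity
  have hlt : 2 * δ / (2 * p + δ) < 2 := by rw [div_lt_iff₀ hs]; linarith
  calc p * exp (2 * δ / (2 * p + δ))
      ≤ p * ((2 + 2 * δ / (2 * p + δ)) / (2 - 2 * δ / (2 * p + δ))) := by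
        gcongr; exact exp_le_two_add_div_two_sub (by positivity) hlt
    _ = p + δ := by field_simp; ring

lemma chernoff_exponent_upper {p δ : ℝ} (hp : 0 ≤ p) (hδ : 0 < δ) :
    -(2 * δ / (2 * p + δ)) * (p + δ) + p * (exp (2 * δ / (2 * p + δ)) - 1)
      ≤ -(δ ^ 2 / (2 * p + δ)) := by
  have := mul_exp_two_mul_div_le hp hδ
  have key : -(2 * δ / (2 * p + δ)) * (p + δ) + δ = -(δ ^ 2 / (2 * p + δ)) := by
    field_simp; ring
  linarith

lemma chernoff_exponent_lower {p δ : ℝ} (hp : 0 ≤ p) (hδ : 0 < δ) :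
    2 * δ / (2 * p + δ) * (p - δ) + p * (exp (-(2 * δ / (2 * p + δ))) - 1)
      ≤ -(δ ^ 2 / (2 * p + δ)) := by
  set t := 2 * δ / (2 * p + δ) with ht
  have hexp := exp_le_one_add_add_sq_div_two_of_nonpos (neg_nonpos.mpr (by positivity : 0 ≤ t))
  have hquad : t * (p - δ) + p * (-t + (-t) ^ 2 / 2) ≤ -(δ ^ 2 / (2 * p + δ)) := by
    rw [ht, ← sub_nonneg]
    have : 0 ≤ δ ^ 3 / (2 * p + δ) ^ 2 := by positivity
    convert this using 1
    field_simp; ring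
  nlinarith [mul_le_mul_of_nonneg_left hexp hp]

section Bernoulli

variable {Ω ι : Type*} [MeasurableSpace Ω] {μ : Measure Ω}

lemma exp_mul_eq_of_eq_zero_or_eq_one {x : ℝ} (hx : x = 0 ∨ x = 1) (t : ℝ) :
    exp (t * x) = 1 + (exp t - 1) * x := by
  rcases hx with rfl | rfl <;> simp

lemma integrable_of_eq_zero_or_eq_one [IsFiniteMeasure μ] {X : Ω → ℝ} (hXm : Measurable X)
    (hX : ∀ ω, X ω = 0 ∨ X ω = 1) : Integrable X μ :=
  Integrable.of_mem_Icc 0 1 hXm.aemeasurable <| ae_of_all _ fun ω => by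
    rcases hX ω with h | h <;> simp [h]

lemma integrable_exp_mul_of_eq_zero_or_eq_one [IsFiniteMeasure μ] {X : Ω → ℝ}
    (hXm : Measurable X) (hX : ∀ ω, X ω = 0 ∨ X ω = 1) (t : ℝ) :
    Integrable (fun ω => exp (t * X ω)) μ := by
  simp_rw [exp_mul_eq_of_eq_zero_or_eq_one (hX _)]
  exact (integrable_const 1).add ((integrable_of_eq_zero_or_eq_one hXm hX).const_mul _)

lemma mgf_of_eq_zero_or_eq_one [IsProbabilityMeasure μ] {X : Ω → ℝ} (hXm : Measurable X)
    (hX : ∀ ω, X ω = 0 ∨ X ω = 1) (t : ℝ) : mgf X μ t = 1 + μ[X] * (exp t - 1) := by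
  simp_rw [mgf, exp_mul_eq_of_eq_zero_or_eq_one (hX _)]
  rw [integral_add (integrable_const 1) ((integrable_of_eq_zero_or_eq_one hXm hX).const_mul _),
    integral_const_mul]
  simp [mul_comm]

variable [Fintype ι] {Y : ι → Ω → ℝ} {p : ℝ}

lemma mgf_sum_le_of_eq_zero_or_eq_one (hm : ∀ i, Measurable (Y i)) (hindep : iIndepFun Y μ)
    (hY : ∀ i ω, Y i ω = 0 ∨ Y i ω = 1) (hmean : ∀ i, μ[Y i] = p) (t : ℝ) :
    mgf (∑ i, Y i) μ t ≤ exp (Fintype.card ι * (p * (exp t - 1))) := by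
  have := hindep.isProbabilityMeasure
  rw [hindep.mgf_sum hm, ← Finset.card_univ, ← nsmul_eq_mul, ← Finset.sum_const, exp_sum]
  refine Finset.prod_le_prod (fun i _ => mgf_nonneg) fun i _ => ?_
  rw [mgf_of_eq_zero_or_eq_one (hm i) (hY i), hmean, add_comm]
  exact add_one_le_exp _

lemma integrable_exp_mul_sum_of_eq_zero_or_eq_one (hm : ∀ i, Measurable (Y i))
    (hindep : iIndepFun Y μ) (hY : ∀ i ω, Y i ω = 0 ∨ Y i ω = 1) (t : ℝ) :
    Integrable (fun ω => exp (t * (∑ i, Y i) ω)) μ :=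
  have := hindep.isProbabilityMeasure
  hindep.integrable_exp_mul_sum hm (s := Finset.univ)
    fun i _ => integrable_exp_mul_of_eq_zero_or_eq_one (hm i) (hY i) t

lemma measure_sum_ge_le_of_eq_zero_or_eq_one (hm : ∀ i, Measurable (Y i))
    (hindep : iIndepFun Y μ) (hY : ∀ i ω, Y i ω = 0 ∨ Y i ω = 1) (hmean : ∀ i, μ[Y i] = p)
    {t : ℝ} (ht : 0 ≤ t) (a : ℝ) :
    μ.real {ω | a ≤ ∑ i, Y i ω} ≤ exp (-t * a + Fintype.card ι * (p * (exp t - 1))) := by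
  have := hindep.isProbabilityMeasure
  have hchernoff := measure_ge_le_exp_mul_mgf a ht
    (integrable_exp_mul_sum_of_eq_zero_or_eq_one hm hindep hY t)
  simp only [Finset.sum_apply] at hchernoff
  rw [exp_add]
  exact hchernoff.trans <| by
    gcongr; exact mgf_sum_le_of_eq_zero_or_eq_one hm hindep hY hmean t

lemma measure_sum_le_le_of_eq_zero_or_eq_one (hm : ∀ i, Measurable (Y i))
    (hindep : iIndepFun Y μ) (hY : ∀ i ω, Y i ω = 0 ∨ Y i ω = 1) (hmean : ∀ i, μ[Y i] = p)
    {t : ℝ} (ht : t ≤ 0) (a : ℝ) :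
    μ.real {ω | ∑ i, Y i ω ≤ a} ≤ exp (-t * a + Fintype.card ι * (p * (exp t - 1))) := by
  have := hindep.isProbabilityMeasure
  have hchernoff := measure_le_le_exp_mul_mgf a ht
    (integrable_exp_mul_sum_of_eq_zero_or_eq_one hm hindep hY t)
  simp only [Finset.sum_apply] at hchernoff
  rw [exp_add]
  exact hchernoff.trans <| by
    gcongr; exact mgf_sum_le_of_eq_zero_or_eq_one hm hindep hY hmean t

theorem measure_abs_sum_sub_ge_le_of_eq_zero_or_eq_one (hm : ∀ i, Measurable (Y i))
    (hindep : iIndepFun Y μ) (hY : ∀ i ω, Y i ω = 0 ∨ Y i ω = 1) (hmean : ∀ i, μ[Y i] = p)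
    (hp : 0 ≤ p) {δ : ℝ} (hδ : 0 < δ) :
    μ.real {ω | Fintype.card ι * δ ≤ |∑ i, Y i ω - Fintype.card ι * p|}
      ≤ 2 * exp (-(Fintype.card ι * (δ ^ 2 / (2 * p + δ)))) := by
  have := hindep.isProbabilityMeasure
  set N : ℝ := (Fintype.card ι : ℝ)
  have hN : 0 ≤ N := Nat.cast_nonneg _
  set E := δ ^ 2 / (2 * p + δ)
  have ht : 0 ≤ 2 * δ / (2 * p + δ) := by positivity
  have hsplit : {ω | N * δ ≤ |∑ i, Y i ω - N * p|}
      ⊆ {ω | N * (p + δ) ≤ ∑ i, Y i ω} ∪ {ω | ∑ i, Y i ω ≤ N * (p - δ)} := by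
    intro ω hω
    simp only [Set.mem_union, Set.mem_ofPred_eq] at hω ⊢
    rcases le_abs'.mp hω with h | h
    · right; linarith
    · left; linarith
  have hupper : μ.real {ω | N * (p + δ) ≤ ∑ i, Y i ω} ≤ exp (-(N * E)) := by
    refine (measure_sum_ge_le_of_eq_zero_or_eq_one hm hindep hY hmean ht _).trans ?_
    gcongr
    nlinarith [mul_le_mul_of_nonneg_left (chernoff_exponent_upper hp hδ) hN]
  have hlower : μ.real {ω | ∑ i, Y i ω ≤ N * (p - δ)} ≤ exp (-(N * E)) := by
    refine (measure_sum_le_le_of_eq_zero_or_eq_one hm hindep hY hmean (neg_nonpos.mpr ht) _).trans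
      ?_
    gcongr
    nlinarith [mul_le_mul_of_nonneg_left (chernoff_exponent_lower hp hδ) hN]
  calc μ.real {ω | N * δ ≤ |∑ i, Y i ω - N * p|}
      ≤ μ.real ({ω | N * (p + δ) ≤ ∑ i, Y i ω} ∪ {ω | ∑ i, Y i ω ≤ N * (p - δ)}) :=
        measureReal_mono hsplit
    _ ≤ μ.real {ω | N * (p + δ) ≤ ∑ i, Y i ω} + μ.real {ω | ∑ i, Y i ω ≤ N * (p - δ)} :=
        measureReal_union_le _ _
    _ ≤ 2 * exp (-(N * E)) := by linarith

end Bernoulli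

lemma two_mul_exp_neg_log_eq {n C ℓ : ℝ} (hn : 0 < n) (hC : 0 < C) :
    2 * exp (-(ℓ * log n + log C + log 2)) = n ^ (-ℓ) / C := by
  rw [neg_add, neg_add, exp_add, exp_add, exp_neg (log C), exp_neg (log 2), exp_log hC,
    exp_log two_pos, rpow_def_of_pos hn, mul_comm (log n), neg_mul]
  field_simp

lemma le_abs_mul_div_sub_iff {n θ s a c : ℝ} (hn : 0 < n) (hθ : 0 < θ) :
    c ≤ |n * (s / θ) - a| ↔ θ * (c / n) ≤ |s - θ * (a / n)| := by
  rw [show n * (s / θ) - a = n / θ * (s - θ * (a / n)) by field_simp, abs_mul,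
    abs_of_pos (by positivity), ← div_le_iff₀' (by positivity)]
  congr! 1
  field_simp

lemma le_mul_chernoff_exponent {n ε OPT EIS L θ : ℝ} (hn : 0 < n) (hε : 0 < ε)
    (hOPT : 0 < OPT) (hEIS0 : 0 ≤ EIS) (hEIS : EIS ≤ OPT) (hθ0 : 0 ≤ θ)
    (hθ : (8 + 2 * ε) * n * L / (OPT * ε ^ 2) ≤ θ) :
    L ≤ θ * ((ε / 2 * OPT / n) ^ 2 / (2 * (EIS / n) + ε / 2 * OPT / n)) := by
  calc L = (8 + 2 * ε) * n * L / (OPT * ε ^ 2) * (ε ^ 2 * OPT / ((8 + 2 * ε) * n)) := by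
        field_simp
    _ ≤ θ * (ε ^ 2 * OPT / ((8 + 2 * ε) * n)) := by gcongr
    _ = θ * ((ε / 2 * OPT / n) ^ 2 / (2 * (OPT / n) + ε / 2 * OPT / n)) := by
        field_simp; ring
    _ ≤ θ * ((ε / 2 * OPT / n) ^ 2 / (2 * (EIS / n) + ε / 2 * OPT / n)) := by
        gcongr

theorem rr_fraction_concentration_general
    {Ω : Type*} [MeasureSpace Ω]
    (n k : ℕ) (hn : 1 ≤ n) (hkn : k ≤ n)
    (ℓ ε OPT EIS : ℝ)
    (hε : 0 < ε) (hℓ : 0 < ℓ) (hOPT : 0 < OPT)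
    (hEIS0 : 0 ≤ EIS) (hEISle : EIS ≤ OPT)
    (θ : ℕ)
    (hθ : ((8:ℝ) + 2*ε) * n * (ℓ * Real.log n + Real.log (Nat.choose n k) + Real.log 2)
            / (OPT * ε^2) ≤ θ)
    (Y : Fin θ → Ω → ℝ)
    (hmeas : ∀ i, Measurable (Y i))
    (hindep : iIndepFun Y ℙ)
    (hBern : ∀ i ω, Y i ω = 0 ∨ Y i ω = 1)
    (hmean : ∀ i, ∫ ω, Y i ω ∂ℙ = EIS / n) :
    (ℙ {ω | ε/2 * OPT ≤ |(n : ℝ) * ((∑ i, Y i ω) / θ) - EIS|}).toReal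
      ≤ (n : ℝ) ^ (-ℓ) / (Nat.choose n k) := by
  have hn0 : (0 : ℝ) < n := by exact_mod_cast hn
  have hC : (0 : ℝ) < n.choose k := by exact_mod_cast Nat.choose_pos hkn
  set L := ℓ * log n + log (n.choose k) + log 2
  have hL : 0 < L := by
    have : 0 ≤ ℓ * log n := mul_nonneg hℓ.le (log_nonneg (by exact_mod_cast hn))
    linarith [log_nonneg (by exact_mod_cast hC : (1 : ℝ) ≤ n.choose k), log_pos one_lt_two]
  have hθ0 : (0 : ℝ) < θ := lt_of_lt_of_le (by positivity) hθ
  set δ := ε / 2 * OPT / n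
  have hevent : {ω | ε / 2 * OPT ≤ |(n : ℝ) * ((∑ i, Y i ω) / θ) - EIS|}
      = {ω | θ * δ ≤ |∑ i, Y i ω - θ * (EIS / n)|} :=
    Set.ext fun ω => le_abs_mul_div_sub_iff hn0 hθ0
  have hchernoff := measure_abs_sum_sub_ge_le_of_eq_zero_or_eq_one hmeas hindep hBern hmean
    (by positivity) (by positivity : 0 < δ)
  rw [Fintype.card_fin] at hchernoff
  calc (ℙ {ω | ε / 2 * OPT ≤ |(n : ℝ) * ((∑ i, Y i ω) / θ) - EIS|}).toReal
      ≤ 2 * exp (-(θ * (δ ^ 2 / (2 * (EIS / n) + δ)))) := by rw [hevent]; exact hchernoff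
    _ ≤ 2 * exp (-L) := by
        gcongr; exact le_mul_chernoff_exponent hn0 hε hOPT hEIS0 hEISle hθ0.le hθ
    _ = (n : ℝ) ^ (-ℓ) / (Nat.choose n k) := two_mul_exp_neg_log_eq hn0 hC

/-- Lemma 3 of Tang–Xiao–Shi: if `θ ≥ (8+2ε)·n·(ℓ log n + log C(n,k) + log 2)/(OPT·ε²)`,
and `Y i` are the i.i.d. Bernoulli indicators `1[S ∩ R_i ≠ ∅]` for i.i.d. random RR sets
`R_1, …, R_θ` (so each has mean `E[I(S)]/n` and `E[I(S)] ≤ OPT` for `|S| ≤ k`), then the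
estimate `n·F_R(S)` deviates from `E[I(S)]` by at least `(ε/2)·OPT` with probability at most
`n^{-ℓ}/C(n,k)`. -/
theorem rr_fraction_concentration
    {Ω : Type*} [MeasureSpace Ω] [IsProbabilityMeasure (ℙ : Measure Ω)]
    (n k : ℕ) (hn : 1 ≤ n) (hk : 1 ≤ k) (hkn : k ≤ n)
    (ℓ ε OPT EIS : ℝ)
    (hε : 0 < ε) (hℓ : 0 < ℓ) (hOPT : 0 < OPT)
    (hEIS0 : 0 ≤ EIS) (hEISle : EIS ≤ OPT)
    (θ : ℕ)
    (hθ : ((8:ℝ) + 2*ε) * n * (ℓ * Real.log n + Real.log (Nat.choose n k) + Real.log 2)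
            / (OPT * ε^2) ≤ θ)
    (Y : Fin θ → Ω → ℝ)
    (hmeas : ∀ i, Measurable (Y i))
    (hindep : iIndepFun Y ℙ)
    (hBern : ∀ i ω, Y i ω = 0 ∨ Y i ω = 1)
    (hmean : ∀ i, ∫ ω, Y i ω ∂ℙ = EIS / n) :
    (ℙ {ω | ε/2 * OPT ≤ |(n : ℝ) * ((∑ i, Y i ω) / θ) - EIS|}).toReal
      ≤ (n : ℝ) ^ (-ℓ) / (Nat.choose n k) :=
  rr_fraction_concentration_general n k hn hkn ℓ ε OPT EIS hε hℓ hOPT hEIS0 hEISle θ hθ Y hmeas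
    hindep hBern hmean
end

section
/- Suppose that for every node set S of size at most k, |n·F_R(S) − E[I(S)]| < (ε/2)·OPT, and that S_k is a node set of size k satisfying F_R(S_k) ≥ (1−1/e)·F_R(S) for all size-k sets S (a (1−1/e)-approximate maximizer of coverage). Then E[I(S_k)] > (1 − 1/e − ε)·OPT. -/
/-!
Comparing `Sk` with an optimal set `S*` through the estimator `n·F` costs one estimation error
on each side, and the approximation ratio `c = 1 - 1/e ≤ 1` only shrinks the error on the `S*`
side, so the total loss is at most `2 · (ε/2)·OPT = ε·OPT`.
-/

theorem lt_of_approx_maximizer_of_abs_sub_lt {α : Type*} (f g : α → ℝ) {a b : α} {c η : ℝ}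
    (hc : 0 ≤ c) (hab : c * f b ≤ f a) (ha : |f a - g a| < η) (hb : |f b - g b| < η) :
    c * g b - (1 + c) * η < g a := by
  rw [abs_lt] at ha hb
  calc c * g b - (1 + c) * η
      = c * (g b - η) - η := by ring
    _ ≤ c * f b - η := by gcongr; linarith
    _ ≤ f a - η := by gcongr
    _ < g a := by linarith

theorem one_sub_inv_exp_one_mem_Icc : 1 - 1 / Real.exp 1 ∈ Set.Icc (0 : ℝ) 1 := by
  have hinv : 0 < 1 / Real.exp 1 := by positivity
  have hinv_le : 1 / Real.exp 1 ≤ 1 :=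
    (div_le_one (Real.exp_pos 1)).2 (Real.one_le_exp zero_le_one)
  constructor <;> linarith

theorem approx_coverage_gives_approx_spread_general
    {V : Type*}
    (n k : ℕ)
    (F EI : Finset V → ℝ) (ε OPT : ℝ)
    (hOPT : IsGreatest (EI '' {S : Finset V | S.card = k}) OPT)
    (herr : ∀ S : Finset V, S.card ≤ k → |(n : ℝ) * F S - EI S| < ε/2 * OPT)
    (Sk : Finset V) (hSk : Sk.card = k)
    (happrox : ∀ S : Finset V, S.card = k → (1 - 1/Real.exp 1) * F S ≤ F Sk) :
    (1 - 1/Real.exp 1 - ε) * OPT < EI Sk := by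
  obtain ⟨⟨Sopt, hSopt, rfl⟩, -⟩ := hOPT
  obtain ⟨hc0, hc1⟩ := one_sub_inv_exp_one_mem_Icc
  have herr_nonneg : 0 ≤ ε / 2 * EI Sopt :=
    (abs_nonneg _).trans (herr ∅ (by simp)).le
  have hcover : (1 - 1 / Real.exp 1) * (n * F Sopt) ≤ n * F Sk := by
    rw [mul_left_comm]
    exact mul_le_mul_of_nonneg_left (happrox Sopt hSopt) n.cast_nonneg
  have hspread := lt_of_approx_maximizer_of_abs_sub_lt (fun S ↦ (n : ℝ) * F S) EI hc0 hcover
    (herr Sk hSk.le) (herr Sopt hSopt.le)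
  linarith [mul_nonneg (sub_nonneg.2 hc1) herr_nonneg]

/-- Deterministic core of Theorem 1 of Tang–Xiao–Shi: if `n·F_R(S)` estimates the expected
spread `EI S` within `(ε/2)·OPT` for every node set `S` of size at most `k`, and `Sk` is a
size-`k` `(1-1/e)`-approximate maximizer of the coverage `F_R`, then
`EI Sk > (1 - 1/e - ε)·OPT`. -/
theorem approx_coverage_gives_approx_spread
    {V : Type*} [DecidableEq V] [Fintype V]
    (n k : ℕ) (hn : n = Fintype.card V) (hk : 1 ≤ k)
    (F EI : Finset V → ℝ) (ε OPT : ℝ) (hε0 : 0 < ε) (hε1 : ε < 1)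
    (hOPT : IsGreatest (EI '' {S : Finset V | S.card = k}) OPT)
    (herr : ∀ S : Finset V, S.card ≤ k → |(n : ℝ) * F S - EI S| < ε/2 * OPT)
    (Sk : Finset V) (hSk : Sk.card = k)
    (happrox : ∀ S : Finset V, S.card = k → (1 - 1/Real.exp 1) * F S ≤ F Sk) :
    (1 - 1/Real.exp 1 - ε) * OPT < EI Sk :=
  approx_coverage_gives_approx_spread_general n k F EI ε OPT hOPT herr Sk hSk happrox
end

section
/- Let R be a random RR set of a finite directed graph G with n nodes and m edges, and let w(R) = Σ_{v∈R} indeg(v) be its width. Let v* be a random node sampled with probability proportional to its in-degree. Then (n/m)·E[w(R)] = E[I({v*})], the expected spread of the single random seed v*. -/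
open MeasureTheory ProbabilityTheory
open scoped Classical

/-! Fix a percolated graph `ω`. A node `u` lies in the RR set of the target `t` exactly when `t`
is reachable from `u`, so summing the weights of the RR sets over all `n` targets counts each `u`
once for every node it reaches: `n · E_t[w(R)] = Σ_u indeg(u) · I_ω({u})`. Taking expectations
over `ω` and dividing by `m` gives the identity. -/

open Finset

theorem PMF.integral_uniformOfFintype {α : Type*} [Fintype α] [Nonempty α] [MeasurableSpace α]
    [MeasurableSingletonClass α] (f : α → ℝ) :
    ∫ a, f a ∂(PMF.uniformOfFintype α).toMeasure = (Fintype.card α : ℝ)⁻¹ * ∑ a, f a := by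
  simp [PMF.integral_eq_sum, Finset.mul_sum]

theorem Finset.sum_sum_filter_eq_sum_card_smul {V M : Type*} [Fintype V] [AddCommMonoid M]
    (r : V → V → Prop) (w : V → M) :
    ∑ t, ∑ u ∈ univ.filter (r · t), w u = ∑ u, #(univ.filter (r u ·)) • w u := by
  simp only [sum_filter, card_filter, sum_smul, ite_smul, one_smul, zero_smul]
  exact sum_comm

theorem card_mul_integral_prod_uniform_sum_filter {Ω V : Type*} [MeasurableSpace Ω] [Finite Ω]
    [MeasurableSingletonClass Ω] (μ : Measure Ω) [IsFiniteMeasure μ] [Fintype V] [Nonempty V]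
    [MeasurableSpace V] [MeasurableSingletonClass V] (r : Ω → V → V → Prop) (w : V → ℝ) :
    (Fintype.card V : ℝ) *
        ∫ x, ∑ u ∈ univ.filter (r x.1 · x.2), w u ∂(μ.prod (PMF.uniformOfFintype V).toMeasure)
      = ∑ u, w u * ∫ ω, (#(univ.filter (r ω u ·)) : ℝ) ∂μ := by
  have hV : (Fintype.card V : ℝ) ≠ 0 := Nat.cast_ne_zero.mpr Fintype.card_ne_zero
  rw [integral_prod _ Integrable.of_finite]
  simp only [PMF.integral_uniformOfFintype, sum_sum_filter_eq_sum_card_smul, nsmul_eq_mul,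
    integral_const_mul, mul_inv_cancel_left₀ hV]
  rw [integral_finsetSum _ fun _ _ => Integrable.of_finite]
  exact sum_congr rfl fun u _ => by rw [integral_mul_const, mul_comm]

theorem width_expectation_eq_degree_weighted_spread_general
    {V : Type*} [Fintype V] [Nonempty V] [MeasurableSpace V] [MeasurableSingletonClass V]
    (E : V → V → Prop)
    (μ : Measure (V → V → Bool)) [IsProbabilityMeasure μ]
    (indeg : V → ℕ)
    (m : ℕ) :
    ((Fintype.card V : ℝ) / m) *
      ∫ x, (∑ u ∈ Finset.univ.filter
              (fun u : V => Relation.ReflTransGen (fun a b => E a b ∧ x.1 a b = true) u x.2),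
            (indeg u : ℝ))
        ∂(μ.prod (PMF.uniformOfFintype V).toMeasure)
    = ∑ v : V, ((indeg v : ℝ) / m) *
        ∫ ω, ((Finset.univ.filter (fun w : V =>
            Relation.ReflTransGen (fun a b => E a b ∧ ω a b = true) v w)).card : ℝ) ∂μ := by
  have coupling := card_mul_integral_prod_uniform_sum_filter μ
    (fun ω => Relation.ReflTransGen fun a b => E a b ∧ ω a b = true) (fun u => (indeg u : ℝ))
  rw [div_mul_eq_mul_div, coupling, sum_div]
  exact sum_congr rfl fun _ _ => div_mul_eq_mul_div _ _ _ |>.symm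

/-- Lemma 5 of Tang–Xiao–Shi: `(n/m)·E[w(R)] = E[I({v*})]`, where `R` is a random RR set
(generated for a uniformly random node on an edge-percolated subgraph of `G`),
`w(R) = Σ_{u ∈ R} indeg(u)` is its width, and `v*` is a random node sampled with probability
proportional to its in-degree; `I({v*})` is the number of nodes reachable from `v*` in the
percolated subgraph (the spread of the single seed `v*` under the IC model). -/
theorem width_expectation_eq_degree_weighted_spread
    {V : Type*} [Fintype V] [Nonempty V] [MeasurableSpace V] [MeasurableSingletonClass V]
    (E : V → V → Prop) [DecidableRel E]
    (μ : Measure (V → V → Bool)) [IsProbabilityMeasure μ]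
    (indeg : V → ℕ) (hindeg : ∀ v, indeg v = (Finset.univ.filter (fun u => E u v)).card)
    (m : ℕ) (hm : m = ∑ v : V, indeg v) (hm0 : 0 < m) :
    ((Fintype.card V : ℝ) / m) *
      ∫ x, (∑ u ∈ Finset.univ.filter
              (fun u : V => Relation.ReflTransGen (fun a b => E a b ∧ x.1 a b = true) u x.2),
            (indeg u : ℝ))
        ∂(μ.prod (PMF.uniformOfFintype V).toMeasure)
    = ∑ v : V, ((indeg v : ℝ) / m) *
        ∫ ω, ((Finset.univ.filter (fun w : V =>
            Relation.ReflTransGen (fun a b => E a b ∧ ω a b = true) v w)).card : ℝ) ∂μ :=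
  width_expectation_eq_degree_weighted_spread_general E μ indeg m
end

section
/- Fix j ≥ 1 and let μ ≤ 2^{−j}. For 1 ≤ i ≤ j−1, let s_i be the sum of c_i = (6ℓ log n + 6 log log₂ n)·2^i i.i.d. random variables valued in [0,1] with mean μ. Then Pr[s_i/c_i > 2^{−i}] < 1/(n^ℓ · log₂ n). -/
/-!
Exponential Markov with `t = log 2`: by convexity a `[0,1]`-valued variable of mean `μ` has
`E[2^X] ≤ 1 + μ ≤ exp μ`, so by independence `P(S ≥ c·2^{-i}) ≤ 2^{-c·2^{-i}} · exp(c μ)`.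
Writing `c = 6L·2^i` with `L = ℓ log n + log log₂ n`, the hypothesis `μ ≤ 2^{-j} ≤ 2^{-i-1}` gives
`c μ ≤ 3L`, and the bound becomes `exp(-(6 log 2 - 3) L) < exp(-L) = 1/(n^ℓ log₂ n)`
because `log 2 > 2/3`.
-/

open MeasureTheory ProbabilityTheory Real

lemma Real.one_div_rpow_mul_eq_exp_neg {x y : ℝ} (hx : 0 < x) (hy : 0 < y) (ℓ : ℝ) :
    1 / (x ^ ℓ * y) = exp (-(ℓ * log x + log y)) := by
  rw [rpow_def_of_pos hx, exp_neg, exp_add, exp_log hy, mul_comm ℓ, one_div]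

lemma Real.two_rpow_neg_le_half_two_rpow_neg {i j : ℕ} (hij : i < j) :
    (2:ℝ) ^ (-(j:ℝ)) ≤ 2 ^ (-(i:ℝ)) / 2 := by
  have hij' : (i:ℝ) + 1 ≤ j := by exact_mod_cast hij
  calc (2:ℝ) ^ (-(j:ℝ)) ≤ 2 ^ (-(i:ℝ) + -1) :=
        rpow_le_rpow_of_exponent_le one_le_two (by linarith)
    _ = 2 ^ (-(i:ℝ)) / 2 := by rw [rpow_add zero_lt_two, rpow_neg_one, div_eq_mul_inv]

lemma Real.exp_mul_le_one_add_exp_sub_one_mul {x : ℝ} (hx : x ∈ Set.Icc (0 : ℝ) 1) (t : ℝ) :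
    exp (t * x) ≤ 1 + (exp t - 1) * x := by
  have hchord := convexOn_exp.2 (Set.mem_univ 0) (Set.mem_univ t) (sub_nonneg.2 hx.2) hx.1
    (sub_add_cancel 1 x)
  simp only [smul_eq_mul, mul_zero, zero_add, exp_zero] at hchord
  calc exp (t * x) = exp (x * t) := by rw [mul_comm]
    _ ≤ (1 - x) * 1 + x * exp t := hchord
    _ = 1 + (exp t - 1) * x := by ring

namespace ProbabilityTheory

variable {Ω ι : Type*} {m : MeasurableSpace Ω} {μ : Measure Ω}

lemma mgf_le_exp_of_mem_Icc_zero_one [IsProbabilityMeasure μ] {X : Ω → ℝ}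
    (hX : AEMeasurable X μ) (hb : ∀ ω, X ω ∈ Set.Icc (0 : ℝ) 1) (t : ℝ) :
    mgf X μ t ≤ exp ((exp t - 1) * μ[X]) := by
  have hXint : Integrable X μ := .of_mem_Icc 0 1 hX (.of_forall hb)
  have hchord : mgf X μ t ≤ ∫ ω, (1 + (exp t - 1) * X ω) ∂μ :=
    integral_mono (integrable_exp_mul_of_mem_Icc hX (.of_forall hb))
      ((integrable_const 1).add (hXint.const_mul _))
      fun ω ↦ exp_mul_le_one_add_exp_sub_one_mul (hb ω) t
  rw [integral_add (integrable_const 1) (hXint.const_mul _), integral_const_mul] at hchord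
  simp only [integral_const, probReal_univ, smul_eq_mul, one_mul] at hchord
  linarith [add_one_le_exp ((exp t - 1) * μ[X])]

lemma iIndepFun.measureReal_sum_ge_le_of_mem_Icc_zero_one [Fintype ι] {X : ι → Ω → ℝ}
    (hindep : iIndepFun X μ) (hmeas : ∀ i, Measurable (X i))
    (hb : ∀ i ω, X i ω ∈ Set.Icc (0 : ℝ) 1) {t : ℝ} (ht : 0 ≤ t) (ε : ℝ) :
    μ.real {ω | ε ≤ ∑ i, X i ω} ≤ exp (-t * ε + (exp t - 1) * ∑ i, μ[X i]) := by
  have := hindep.isProbabilityMeasure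
  have hmgf : mgf (∑ i, X i) μ t ≤ exp ((exp t - 1) * ∑ i, μ[X i]) := by
    rw [hindep.mgf_sum hmeas, Finset.mul_sum, exp_sum]
    exact Finset.prod_le_prod (fun i _ ↦ mgf_nonneg)
      fun i _ ↦ mgf_le_exp_of_mem_Icc_zero_one (hmeas i).aemeasurable (hb i) t
  have hint := hindep.integrable_exp_mul_sum (t := t) hmeas (s := Finset.univ)
    fun i _ ↦ integrable_exp_mul_of_mem_Icc (hmeas i).aemeasurable (.of_forall (hb i))
  calc μ.real {ω | ε ≤ ∑ i, X i ω}
      = μ.real {ω | ε ≤ (∑ i, X i) ω} := by simp only [Finset.sum_apply]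
    _ ≤ exp (-t * ε) * mgf (∑ i, X i) μ t := measure_ge_le_exp_mul_mgf ε ht hint
    _ ≤ exp (-t * ε) * exp ((exp t - 1) * ∑ i, μ[X i]) := by gcongr
    _ = exp (-t * ε + (exp t - 1) * ∑ i, μ[X i]) := (exp_add _ _).symm

end ProbabilityTheory

theorem kpt_estimation_early_stop_unlikely_general
    {Ω : Type*} [MeasureSpace Ω] [IsProbabilityMeasure (ℙ : Measure Ω)]
    (n : ℕ) (hn : 2 ≤ n) (ℓ : ℝ) (hℓ : 0 < ℓ)
    (j i : ℕ) (hj : 1 ≤ j) (hij : i ≤ j - 1)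
    (μ : ℝ) (hμ : μ ≤ (2:ℝ) ^ (-(j:ℝ)))
    (c : ℕ) (hc : (c:ℝ) = (6 * ℓ * Real.log n + 6 * Real.log (Real.logb 2 n)) * 2 ^ i)
    (X : Fin c → Ω → ℝ)
    (hmeas : ∀ a, Measurable (X a))
    (hindep : iIndepFun X ℙ)
    (hbound : ∀ a ω, X a ω ∈ Set.Icc (0:ℝ) 1)
    (hmean : ∀ a, ∫ ω, X a ω ∂ℙ = μ) :
    (ℙ {ω | (2:ℝ) ^ (-(i:ℝ)) < (∑ a, X a ω) / c}).toReal
      < 1 / ((n:ℝ) ^ ℓ * Real.logb 2 n) := by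
  have hlogb : 1 ≤ logb 2 n := by
    rw [le_logb_iff_rpow_le one_lt_two (by positivity), rpow_one]
    exact_mod_cast hn
  set L := ℓ * log n + log (logb 2 n)
  have hL : 0 < L := add_pos_of_pos_of_nonneg
    (mul_pos hℓ (log_pos (by exact_mod_cast hn))) (log_nonneg hlogb)
  have hc' : (c:ℝ) = 6 * L * 2 ^ i := by rw [hc]; ring
  have hcpos : (0:ℝ) < c := by rw [hc']; positivity
  have hthreshold : (c:ℝ) * 2 ^ (-(i:ℝ)) = 6 * L := by
    rw [hc', rpow_neg zero_le_two, rpow_natCast]; field_simp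
  have hmeanSum : (c:ℝ) * μ ≤ 3 * L := by
    have hμi := hμ.trans (two_rpow_neg_le_half_two_rpow_neg (i := i) (by omega))
    nlinarith
  have htail := hindep.measureReal_sum_ge_le_of_mem_Icc_zero_one hmeas hbound
    (log_nonneg one_le_two) ((c:ℝ) * 2 ^ (-(i:ℝ)))
  simp only [exp_log zero_lt_two, hmean, Finset.sum_const, Finset.card_univ, Fintype.card_fin,
    nsmul_eq_mul, hthreshold] at htail
  rw [one_div_rpow_mul_eq_exp_neg (by positivity) (by linarith) ℓ]
  calc (ℙ {ω | (2:ℝ) ^ (-(i:ℝ)) < (∑ a, X a ω) / c}).toReal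
      ≤ (ℙ : Measure Ω).real {ω | 6 * L ≤ ∑ a, X a ω} := by
        refine measureReal_mono fun ω hω ↦ ?_
        rw [Set.mem_ofPred_eq, lt_div_iff₀ hcpos, mul_comm, hthreshold] at hω
        exact hω.le
    _ ≤ exp (-log 2 * (6 * L) + (2 - 1) * (c * μ)) := htail
    _ < exp (-L) := by
        rw [exp_lt_exp]
        nlinarith [log_two_gt_d9]

/-- Lemma 7 of Tang–Xiao–Shi: with `μ ≤ 2^{-j}` and `1 ≤ i ≤ j-1`, if `s_i` is the sum of
`c_i = (6ℓ log n + 6 log log₂ n)·2^i` i.i.d. random variables valued in `[0,1]` with mean `μ`,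
then `Pr[s_i/c_i > 2^{-i}] < 1/(n^ℓ · log₂ n)`. -/
theorem kpt_estimation_early_stop_unlikely
    {Ω : Type*} [MeasureSpace Ω] [IsProbabilityMeasure (ℙ : Measure Ω)]
    (n : ℕ) (hn : 2 ≤ n) (ℓ : ℝ) (hℓ : 0 < ℓ)
    (j i : ℕ) (hj : 1 ≤ j) (hi1 : 1 ≤ i) (hij : i ≤ j - 1)
    (μ : ℝ) (hμ : μ ≤ (2:ℝ) ^ (-(j:ℝ)))
    (c : ℕ) (hc : (c:ℝ) = (6 * ℓ * Real.log n + 6 * Real.log (Real.logb 2 n)) * 2 ^ i)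
    (X : Fin c → Ω → ℝ)
    (hmeas : ∀ a, Measurable (X a))
    (hindep : iIndepFun X ℙ)
    (hident : ∀ a b, IdentDistrib (X a) (X b) ℙ ℙ)
    (hbound : ∀ a ω, X a ω ∈ Set.Icc (0:ℝ) 1)
    (hmean : ∀ a, ∫ ω, X a ω ∂ℙ = μ) :
    (ℙ {ω | (2:ℝ) ^ (-(i:ℝ)) < (∑ a, X a ω) / c}).toReal
      < 1 / ((n:ℝ) ^ ℓ * Real.logb 2 n) :=
  kpt_estimation_early_stop_unlikely_general n hn ℓ hℓ j i hj hij μ hμ c hc X hmeas hindep hbound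
    hmean
end

section
/- Fix j ≥ 1 and let μ ≥ 2^{−j}. For any i ≥ j+1, let s_i be the sum of c_i = (6ℓ log n + 6 log log₂ n)·2^i i.i.d. random variables valued in [0,1] with mean μ. Then Pr[s_i/c_i > 2^{−i}] > 1 − n^{−ℓ·2^{i−j−1}}/log₂ n. -/
/-
Lower-tail Chernoff bound. Convexity of `exp` on `[0, 1]` bounds the mgf of each variable by
`exp ((e^t - 1) μ)`; at `t = -log 2` this gives `Pr[s_i ≤ c_i 2^{-i}] ≤ exp (-c_i μ / 8)`, because
`2^{-i} ≤ μ / 2`. Finally `c_i μ / 8 > ℓ 2^{i-j-1} log n + log log₂ n`, since `2^i μ ≥ 2^{i-j}`.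
-/

open MeasureTheory ProbabilityTheory Real Finset

lemma exp_mul_le_one_add_mul {x : ℝ} (hx : x ∈ Set.Icc 0 1) (t : ℝ) :
    exp (t * x) ≤ 1 + (exp t - 1) * x := by
  have h := convexOn_exp.2 (Set.mem_univ 0) (Set.mem_univ t) (sub_nonneg.2 hx.2) hx.1 (by ring)
  simp only [smul_eq_mul, mul_zero, zero_add, exp_zero] at h
  rw [mul_comm]
  linarith

section Chernoff

variable {Ω : Type*} {m : MeasurableSpace Ω} {P : Measure Ω} [IsProbabilityMeasure P]

lemma mgf_le_exp_of_mem_Icc_zero_one {X : Ω → ℝ} (hX : AEMeasurable X P)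
    (hb : ∀ᵐ ω ∂P, X ω ∈ Set.Icc 0 1) (t : ℝ) :
    mgf X P t ≤ exp ((exp t - 1) * P[X]) := by
  have hXint : Integrable X P := .of_mem_Icc 0 1 hX hb
  calc mgf X P t ≤ ∫ ω, (1 + (exp t - 1) * X ω) ∂P :=
        integral_mono_ae (integrable_exp_mul_of_mem_Icc hX hb)
          ((integrable_const 1).add (hXint.const_mul _))
          (hb.mono fun ω hω => exp_mul_le_one_add_mul hω t)
    _ = 1 + (exp t - 1) * P[X] := by
        rw [integral_add (integrable_const 1) (hXint.const_mul _), integral_const_mul]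
        simp
    _ ≤ exp ((exp t - 1) * P[X]) := by linarith [add_one_le_exp ((exp t - 1) * P[X])]

variable {ι : Type*} {X : ι → Ω → ℝ} {μ : ℝ}

lemma measureReal_sum_le_le_exp (hmeas : ∀ a, Measurable (X a)) (hindep : iIndepFun X P)
    (hb : ∀ a, ∀ᵐ ω ∂P, X a ω ∈ Set.Icc 0 1) (hmean : ∀ a, P[X a] = μ) (s : Finset ι)
    {t : ℝ} (ht : t ≤ 0) (ε : ℝ) :
    P.real {ω | ∑ a ∈ s, X a ω ≤ ε} ≤ exp (-t * ε + #s * ((exp t - 1) * μ)) := by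
  have hint : Integrable (fun ω => exp (t * (∑ a ∈ s, X a) ω)) P :=
    hindep.integrable_exp_mul_sum hmeas fun a _ =>
      integrable_exp_mul_of_mem_Icc (hmeas a).aemeasurable (hb a)
  have hmgf : mgf (∑ a ∈ s, X a) P t ≤ exp (#s * ((exp t - 1) * μ)) := by
    rw [hindep.mgf_sum hmeas, exp_nat_mul, ← prod_const]
    refine prod_le_prod (fun a _ => mgf_nonneg) fun a _ => ?_
    simpa only [hmean a] using mgf_le_exp_of_mem_Icc_zero_one (hmeas a).aemeasurable (hb a) t
  calc P.real {ω | ∑ a ∈ s, X a ω ≤ ε}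
      = P.real {ω | (∑ a ∈ s, X a) ω ≤ ε} := by simp only [Finset.sum_apply]
    _ ≤ exp (-t * ε) * mgf (∑ a ∈ s, X a) P t := measure_le_le_exp_mul_mgf ε ht hint
    _ ≤ exp (-t * ε) * exp (#s * ((exp t - 1) * μ)) := by gcongr
    _ = exp (-t * ε + #s * ((exp t - 1) * μ)) := (exp_add _ _).symm

/-- The lower-tail Chernoff bound at `t = -log 2`; `log 2 < 3 / 4` turns the exponent into
`-(mean / 8)`. -/
lemma measureReal_sum_le_le_exp_neg_div_eight (hmeas : ∀ a, Measurable (X a))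
    (hindep : iIndepFun X P) (hb : ∀ a, ∀ᵐ ω ∂P, X a ω ∈ Set.Icc 0 1) (hmean : ∀ a, P[X a] = μ)
    (hμ : 0 ≤ μ) (s : Finset ι) {ε : ℝ} (hε : ε ≤ #s * μ / 2) :
    P.real {ω | ∑ a ∈ s, X a ω ≤ ε} ≤ exp (-(#s * μ / 8)) := by
  refine (measureReal_sum_le_le_exp hmeas hindep hb hmean s
    (neg_nonpos.2 (log_nonneg one_le_two)) ε).trans (exp_le_exp.2 ?_)
  rw [exp_neg, exp_log two_pos, neg_neg]
  have hlog2 : log 2 < 3 / 4 := log_two_lt_d9.trans (by norm_num)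
  have hmean_nonneg : 0 ≤ (#s : ℝ) * μ := by positivity
  nlinarith [log_pos one_lt_two]

end Chernoff

lemma one_le_logb_two {x : ℝ} (hx : 2 ≤ x) : 1 ≤ logb 2 x := by
  rw [le_logb_iff_rpow_le one_lt_two (by linarith), rpow_one]
  exact hx

lemma two_rpow_neg_le_half {i j : ℕ} (hi : j + 1 ≤ i) {μ : ℝ} (hμ : (2 : ℝ) ^ (-(j : ℝ)) ≤ μ) :
    (2 : ℝ) ^ (-(i : ℝ)) ≤ μ / 2 := by
  rw [le_div_iff₀ two_pos, ← rpow_add_one two_ne_zero]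
  refine le_trans (rpow_le_rpow_of_exponent_le one_le_two ?_) hμ
  have : (j : ℝ) + 1 ≤ i := by exact_mod_cast hi
  linarith

lemma rpow_neg_div_logb_eq_exp {x : ℝ} (hx : 0 < x) (hlogb : 0 < logb 2 x) (a : ℝ) :
    x ^ (-a) / logb 2 x = exp (-(a * log x + log (logb 2 x))) := by
  rw [neg_add, exp_add, exp_neg (log _), exp_log hlogb, rpow_def_of_pos hx, div_eq_mul_inv]
  ring_nf

lemma mul_two_pow_sub_add_lt {ℓ L M μ : ℝ} (hℓ : 0 < ℓ) (hL : 0 < L) (hM : 0 ≤ M) {i j : ℕ}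
    (hi : j + 1 ≤ i) (hμ : (2 : ℝ) ^ (-(j : ℝ)) ≤ μ) :
    ℓ * 2 ^ (i - j - 1) * L + M < (6 * ℓ * L + 6 * M) * 2 ^ i * μ / 8 := by
  obtain ⟨k, rfl⟩ : ∃ k, i = j + 1 + k := ⟨i - (j + 1), by omega⟩
  have hscale : (2 : ℝ) ^ (j + 1 + k) * 2 ^ (-(j : ℝ)) = 2 * 2 ^ k := by
    rw [rpow_neg two_pos.le, rpow_natCast, pow_add, pow_succ]
    field_simp
  have hk : (1 : ℝ) ≤ 2 ^ k := one_le_pow₀ one_le_two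
  have hμ' : (6 * ℓ * L + 6 * M) * (2 * 2 ^ k) ≤ (6 * ℓ * L + 6 * M) * 2 ^ (j + 1 + k) * μ := by
    rw [← hscale, ← mul_assoc]
    exact mul_le_mul_of_nonneg_left hμ (by positivity)
  simp only [show j + 1 + k - j - 1 = k by omega]
  nlinarith [mul_pos hℓ hL, mul_le_mul_of_nonneg_left hk hM]

theorem kpt_estimation_late_stop_likely_general
    {Ω : Type*} [MeasureSpace Ω] [IsProbabilityMeasure (ℙ : Measure Ω)]
    (n : ℕ) (hn : 2 ≤ n) (ℓ : ℝ) (hℓ : 0 < ℓ)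
    (j i : ℕ) (hi : j + 1 ≤ i)
    (μ : ℝ) (hμ : (2:ℝ) ^ (-(j:ℝ)) ≤ μ)
    (c : ℕ) (hc : (c:ℝ) = (6 * ℓ * Real.log n + 6 * Real.log (Real.logb 2 n)) * 2 ^ i)
    (X : Fin c → Ω → ℝ)
    (hmeas : ∀ a, Measurable (X a))
    (hindep : iIndepFun X ℙ)
    (hbound : ∀ a ω, X a ω ∈ Set.Icc (0:ℝ) 1)
    (hmean : ∀ a, ∫ ω, X a ω ∂ℙ = μ) :
    1 - (n:ℝ) ^ (-(ℓ * 2 ^ (i - j - 1))) / Real.logb 2 n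
      < (ℙ {ω | (2:ℝ) ^ (-(i:ℝ)) < (∑ a, X a ω) / c}).toReal := by
  have hn1 : (1 : ℝ) < n := by exact_mod_cast hn
  have hlogb : 1 ≤ logb 2 n := one_le_logb_two (by exact_mod_cast hn)
  have hμpos : 0 < μ := (rpow_pos_of_pos two_pos _).trans_le hμ
  have hcpos : 0 < (c : ℝ) := by
    rw [hc]
    exact mul_pos (by nlinarith [mul_pos hℓ (log_pos hn1), log_nonneg hlogb]) (by positivity)
  have hcompl : {ω | (2:ℝ) ^ (-(i:ℝ)) < (∑ a, X a ω) / c}ᶜ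
      = {ω | ∑ a ∈ univ, X a ω ≤ 2 ^ (-(i:ℝ)) * c} := by
    ext ω
    simp [div_le_iff₀ hcpos]
  have hmeasurable : MeasurableSet {ω | (2:ℝ) ^ (-(i:ℝ)) < (∑ a, X a ω) / c} :=
    measurableSet_lt measurable_const (by fun_prop)
  have hhalf := two_rpow_neg_le_half hi hμ
  have htail := measureReal_sum_le_le_exp_neg_div_eight hmeas hindep
    (fun a => ae_of_all _ (hbound a)) hmean hμpos.le univ
    (ε := 2 ^ (-(i:ℝ)) * c) (by simp only [card_univ, Fintype.card_fin]; nlinarith)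
  rw [← hcompl, card_univ, Fintype.card_fin, probReal_compl_eq_one_sub hmeasurable] at htail
  have hlogb_pos : 0 < logb 2 n := one_pos.trans_le hlogb
  have hexponent := mul_two_pow_sub_add_lt hℓ (log_pos hn1) (log_nonneg hlogb) hi hμ
  have hsmall : exp (-(c * μ / 8)) < (n:ℝ) ^ (-(ℓ * 2 ^ (i - j - 1))) / logb 2 n := by
    rw [rpow_neg_div_logb_eq_exp (by positivity) hlogb_pos, exp_lt_exp, neg_lt_neg_iff, hc]
    exact hexponent
  rw [← measureReal_def]
  linarith

/-- Lemma 8 of Tang–Xiao–Shi: with `μ ≥ 2^{-j}` and `i ≥ j+1`, if `s_i` is the sum of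
`c_i = (6ℓ log n + 6 log log₂ n)·2^i` i.i.d. random variables valued in `[0,1]` with mean `μ`,
then `Pr[s_i/c_i > 2^{-i}] > 1 - n^{-ℓ·2^{i-j-1}}/log₂ n`. -/
theorem kpt_estimation_late_stop_likely
    {Ω : Type*} [MeasureSpace Ω] [IsProbabilityMeasure (ℙ : Measure Ω)]
    (n : ℕ) (hn : 2 ≤ n) (ℓ : ℝ) (hℓ : 0 < ℓ)
    (j i : ℕ) (hj : 1 ≤ j) (hi : j + 1 ≤ i)
    (μ : ℝ) (hμ : (2:ℝ) ^ (-(j:ℝ)) ≤ μ)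
    (c : ℕ) (hc : (c:ℝ) = (6 * ℓ * Real.log n + 6 * Real.log (Real.logb 2 n)) * 2 ^ i)
    (X : Fin c → Ω → ℝ)
    (hmeas : ∀ a, Measurable (X a))
    (hindep : iIndepFun X ℙ)
    (hident : ∀ a b, IdentDistrib (X a) (X b) ℙ ℙ)
    (hbound : ∀ a ω, X a ω ∈ Set.Icc (0:ℝ) 1)
    (hmean : ∀ a, ∫ ω, X a ω ∂ℙ = μ) :
    1 - (n:ℝ) ^ (-(ℓ * 2 ^ (i - j - 1))) / Real.logb 2 n
      < (ℙ {ω | (2:ℝ) ^ (-(i:ℝ)) < (∑ a, X a ω) / c}).toReal :=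
  kpt_estimation_late_stop_likely_general n hn ℓ hℓ j i hi μ hμ c hc X hmeas hindep hbound hmean
end

section
/- Let (x_i)_{i=0}^{k} be nonnegative reals with x_0 ≤ OPT, and suppose x_{i−1} − x_i ≥ (1/k)·x_{i−1} − (ε/k)·OPT for each i ∈ {1,…,k}. Then x_k ≤ (1/e)·OPT + (1 − 1/e)·ε·OPT, and consequently OPT − x_k ≥ (1 − 1/e)·(1 − ε)·OPT ≥ (1 − 1/e − ε)·OPT. -/
theorem le_pow_mul_add_one_sub_pow_mul {R : Type*} [CommRing R] [PartialOrder R] [IsOrderedRing R]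
    {x : ℕ → R} {q a c : R} {n : ℕ} (hq : 0 ≤ q) (h0 : x 0 ≤ a)
    (hstep : ∀ i < n, x (i + 1) ≤ q * x i + (1 - q) * c) :
    x n ≤ q ^ n * a + (1 - q ^ n) * c := by
  induction n with
  | zero => simpa using h0
  | succ n ih =>
    have hxn := ih fun i hi => hstep i (hi.trans n.lt_succ_self)
    calc x (n + 1) ≤ q * x n + (1 - q) * c := hstep n n.lt_succ_self
      _ ≤ q * (q ^ n * a + (1 - q ^ n) * c) + (1 - q) * c := by gcongr
      _ = q ^ (n + 1) * a + (1 - q ^ (n + 1)) * c := by ring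

theorem one_sub_inv_pow_le_inv_exp_one {k : ℕ} (hk : 1 ≤ k) :
    (1 - 1 / (k : ℝ)) ^ k ≤ 1 / Real.exp 1 := by
  rw [one_div (Real.exp 1), ← Real.exp_neg]
  exact Real.one_sub_div_pow_le_exp_neg (by exact_mod_cast hk)

theorem greedy_recurrence_bound_general
    (k : ℕ) (hk : 1 ≤ k) (ε OPT : ℝ) (hε0 : 0 ≤ ε) (hε1 : ε ≤ 1) (hOPT : 0 < OPT)
    (x : ℕ → ℝ) (hx0 : x 0 ≤ OPT)
    (hrec : ∀ i, 1 ≤ i → i ≤ k →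
      (1 / (k:ℝ)) * x (i - 1) - (ε / (k:ℝ)) * OPT ≤ x (i - 1) - x i) :
    x k ≤ (1 / Real.exp 1) * OPT + (1 - 1 / Real.exp 1) * ε * OPT ∧
    (1 - 1 / Real.exp 1) * (1 - ε) * OPT ≤ OPT - x k ∧
    (1 - 1 / Real.exp 1 - ε) * OPT ≤ OPT - x k := by
  set q : ℝ := 1 - 1 / (k : ℝ)
  have hq : 0 ≤ q := sub_nonneg.2 <| div_le_one_of_le₀ (by exact_mod_cast hk) (Nat.cast_nonneg k)
  have hstep : ∀ i < k, x (i + 1) ≤ q * x i + (1 - q) * (ε * OPT) := fun i hi => by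
    have := hrec (i + 1) (Nat.le_add_left 1 i) hi
    rw [Nat.add_sub_cancel] at this
    linarith [show (1 - q) * (ε * OPT) = ε / k * OPT by ring]
  have hxk := le_pow_mul_add_one_sub_pow_mul hq hx0 hstep
  have hqk : q ^ k * ((1 - ε) * OPT) ≤ 1 / Real.exp 1 * ((1 - ε) * OPT) :=
    mul_le_mul_of_nonneg_right (one_sub_inv_pow_le_inv_exp_one hk)
      (mul_nonneg (sub_nonneg.2 hε1) hOPT.le)
  have hmain : x k ≤ 1 / Real.exp 1 * OPT + (1 - 1 / Real.exp 1) * ε * OPT := by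
    linarith
  have hεOPT : 0 ≤ 1 / Real.exp 1 * ε * OPT := by positivity
  exact ⟨hmain, by linarith, by linarith⟩

/-- Inductive arithmetic core of the greedy approximation analysis: if `x₀ ≤ OPT` and
`x_{i-1} - x_i ≥ (1/k)·x_{i-1} - (ε/k)·OPT` for `i = 1, …, k`, then
`x_k ≤ (1/e)·OPT + (1 - 1/e)·ε·OPT`, and consequently
`OPT - x_k ≥ (1 - 1/e)·(1 - ε)·OPT ≥ (1 - 1/e - ε)·OPT`. -/
theorem greedy_recurrence_bound
    (k : ℕ) (hk : 1 ≤ k) (ε OPT : ℝ) (hε0 : 0 ≤ ε) (hε1 : ε ≤ 1) (hOPT : 0 < OPT)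
    (x : ℕ → ℝ) (hxnonneg : ∀ i, i ≤ k → 0 ≤ x i) (hx0 : x 0 ≤ OPT)
    (hrec : ∀ i, 1 ≤ i → i ≤ k →
      (1 / (k:ℝ)) * x (i - 1) - (ε / (k:ℝ)) * OPT ≤ x (i - 1) - x i) :
    x k ≤ (1 / Real.exp 1) * OPT + (1 - 1 / Real.exp 1) * ε * OPT ∧
    (1 - 1 / Real.exp 1) * (1 - ε) * OPT ≤ OPT - x k ∧
    (1 - 1 / Real.exp 1 - ε) * OPT ≤ OPT - x k :=
  greedy_recurrence_bound_general k hk ε OPT hε0 hε1 hOPT x hx0 hrec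
end

section
/- Let f : finite sets of nodes → ℝ be monotone and submodular with f(∅) = 0, let S_{i−1} be any set, and let OPT = max over size-k sets S of f(S). If v_i maximizes the marginal gain y(v) = f(S_{i−1} ∪ {v}) − f(S_{i−1}), then y(v_i) ≥ (OPT − f(S_{i−1}))/k. -/
/-!
Diminishing returns bound the gain of adding each element of an optimal set `S` to `T` by the
best single-element gain `y` over `T`. Adding the `k` elements of `S` one by one gives
`OPT ≤ f (S ∪ T) ≤ f T + k * y`.
-/

open Finset

theorem le_add_card_mul_of_marginal_le {V : Type*} [DecidableEq V] {f : Finset V → ℝ}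
    (hsub : ∀ (A B : Finset V) (v : V), A ⊆ B → f (insert v B) - f B ≤ f (insert v A) - f A)
    {T : Finset V} {y : ℝ} (hy : ∀ v : V, f (insert v T) - f T ≤ y) (S : Finset V) :
    f (S ∪ T) ≤ f T + #S * y := by
  induction S using Finset.induction_on with
  | empty => simp
  | @insert a S ha ih =>
    have hgain : f (insert a (S ∪ T)) - f (S ∪ T) ≤ y :=
      (hsub T (S ∪ T) a subset_union_right).trans (hy a)
    rw [insert_union, card_insert_of_notMem ha]
    push_cast
    linarith

theorem submodular_greedy_marginal_gain_general
    {V : Type*} [DecidableEq V]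
    (f : Finset V → ℝ) (k : ℕ)
    (hmono : ∀ A B : Finset V, A ⊆ B → f A ≤ f B)
    (hsub : ∀ (A B : Finset V) (v : V), A ⊆ B →
      f (insert v B) - f B ≤ f (insert v A) - f A)
    (T : Finset V) (OPT : ℝ)
    (hOPT : IsGreatest (f '' {S : Finset V | S.card = k}) OPT)
    (vi : V)
    (hvi : ∀ v : V, f (insert v T) - f T ≤ f (insert vi T) - f T) :
    (OPT - f T) / (k:ℝ) ≤ f (insert vi T) - f T := by
  obtain ⟨⟨S, hScard, rfl⟩, -⟩ := hOPT
  have hgain_nonneg : 0 ≤ f (insert vi T) - f T :=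
    sub_nonneg.mpr (hmono _ _ (subset_insert vi T))
  have hbound : f S ≤ f T + k * (f (insert vi T) - f T) := calc
    f S ≤ f (S ∪ T) := hmono _ _ subset_union_left
    _ ≤ f T + #S * (f (insert vi T) - f T) := le_add_card_mul_of_marginal_le hsub hvi S
    _ = f T + k * (f (insert vi T) - f T) := by rw [show #S = k from hScard]
  exact div_le_of_le_mul₀ k.cast_nonneg hgain_nonneg (by linarith)

/-- Key single-step inequality of the greedy analysis: for a monotone submodular `f` with
`f ∅ = 0`, if `OPT` is the maximum of `f` over size-`k` sets and `vi` maximizes the marginal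
gain over the current set `T`, then the marginal gain of `vi` is at least `(OPT - f T)/k`. -/
theorem submodular_greedy_marginal_gain
    {V : Type*} [DecidableEq V] [Fintype V]
    (f : Finset V → ℝ) (k : ℕ) (hk : 1 ≤ k)
    (hmono : ∀ A B : Finset V, A ⊆ B → f A ≤ f B)
    (hf0 : f ∅ = 0)
    (hsub : ∀ (A B : Finset V) (v : V), A ⊆ B →
      f (insert v B) - f B ≤ f (insert v A) - f A)
    (T : Finset V) (OPT : ℝ)
    (hOPT : IsGreatest (f '' {S : Finset V | S.card = k}) OPT)
    (vi : V)
    (hvi : ∀ v : V, f (insert v T) - f T ≤ f (insert vi T) - f T) :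
    (OPT - f T) / (k:ℝ) ≤ f (insert vi T) - f T :=
  submodular_greedy_marginal_gain_general f k hmono hsub T OPT hOPT vi hvi
end

section
/- Let θ' Bernoulli trials, each with success probability ρ' = E[I(S'_k)]/n ≤ OPT/n, have empirical success fraction f. If θ' = λ'/KPT* with λ' = (2+ε')·ℓ·n·log n/(ε')² and KPT* ≤ OPT, then Pr[f·n > (1+ε')·OPT] ≤ exp(−(ε')²·λ'/((2+ε')·n)) = n^{−ℓ}. -/
/-!
Multiplicative Chernoff bound with `m = θ·OPT/n`, an upper bound for the mean `θ·EIS/n` of the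
number of successes, and `δ = ε'`: the event `f·n > (1 + ε')·OPT` says that the number of
successes exceeds `(1 + ε')·m`, which has probability at most `exp(-ε'²·θ·OPT/((2 + ε')·n))`.
Finally `θ·OPT ≥ θ·KPT* = λ'`.
-/

open MeasureTheory ProbabilityTheory Real

section Chernoff

variable {Ω : Type*} [MeasurableSpace Ω] {μ : Measure Ω}

lemma mgf_le_exp_of_mem_zero_one [IsProbabilityMeasure μ] {X : Ω → ℝ}
    (hX : AEMeasurable X μ) (h01 : ∀ ω, X ω = 0 ∨ X ω = 1) (t : ℝ) :
    mgf X μ t ≤ exp ((exp t - 1) * μ[X]) := by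
  have hexp_affine : ∀ ω, exp (t * X ω) = 1 + (exp t - 1) * X ω := fun ω => by
    rcases h01 ω with h | h <;> simp [h]
  have hX_int : Integrable X μ :=
    .of_mem_Icc 0 1 hX (.of_forall fun ω => by rcases h01 ω with h | h <;> simp [h])
  calc mgf X μ t = ∫ ω, (1 + (exp t - 1) * X ω) ∂μ := by simp only [mgf, hexp_affine]
    _ = 1 + (exp t - 1) * μ[X] := by
        rw [integral_add (integrable_const 1) (hX_int.const_mul _), integral_const_mul]
        simp
    _ ≤ exp ((exp t - 1) * μ[X]) := by linarith [add_one_le_exp ((exp t - 1) * μ[X])]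

theorem ProbabilityTheory.iIndepFun.measureReal_one_add_mul_le_sum_le {ι : Type*} [Fintype ι]
    {Y : ι → Ω → ℝ} (hindep : iIndepFun Y μ) (hmeas : ∀ i, Measurable (Y i))
    (h01 : ∀ i ω, Y i ω = 0 ∨ Y i ω = 1) {m δ : ℝ} (hm : ∑ i, μ[Y i] ≤ m) (hδ : 0 ≤ δ) :
    μ.real {ω | (1 + δ) * m ≤ ∑ i, Y i ω} ≤ exp (-(δ ^ 2 * m) / (2 + δ)) := by
  have := hindep.isProbabilityMeasure
  -- minimiser of the Chernoff exponent `-t (1 + δ) m + (eᵗ - 1) m`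
  set t := log (1 + δ)
  have ht : 0 ≤ t := log_nonneg (by linarith)
  have hexp_t : exp t = 1 + δ := exp_log (by linarith)
  have hm0 : 0 ≤ m := le_trans (Finset.sum_nonneg fun i _ =>
    integral_nonneg fun ω => by rcases h01 i ω with h | h <;> simp [h]) hm
  have hint : Integrable (fun ω => exp (t * (∑ i, Y i) ω)) μ :=
    hindep.integrable_exp_mul_sum hmeas fun i _ => integrable_exp_mul_of_mem_Icc (a := 0) (b := 1)
      (hmeas i).aemeasurable (.of_forall fun ω => by rcases h01 i ω with h | h <;> simp [h])
  have hexponent : -t * ((1 + δ) * m) + δ * ∑ i, μ[Y i] ≤ -(δ ^ 2 * m) / (2 + δ) := by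
    have hlog := le_log_one_add_of_nonneg hδ
    calc -t * ((1 + δ) * m) + δ * ∑ i, μ[Y i] ≤ -(2 * δ / (δ + 2)) * ((1 + δ) * m) + δ * m := by
          nlinarith [mul_le_mul_of_nonneg_right hlog (by positivity : 0 ≤ (1 + δ) * m),
            mul_le_mul_of_nonneg_left hm hδ]
      _ = -(δ ^ 2 * m) / (2 + δ) := by field_simp; ring
  calc μ.real {ω | (1 + δ) * m ≤ ∑ i, Y i ω}
      ≤ exp (-t * ((1 + δ) * m)) * mgf (∑ i, Y i) μ t := by
        simpa only [Finset.sum_apply] using measure_ge_le_exp_mul_mgf _ ht hint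
    _ = exp (-t * ((1 + δ) * m)) * ∏ i, mgf (Y i) μ t := by rw [hindep.mgf_sum hmeas]
    _ ≤ exp (-t * ((1 + δ) * m)) * ∏ i, exp ((exp t - 1) * μ[Y i]) := by
        gcongr with i
        · exact fun i _ => mgf_nonneg
        · exact mgf_le_exp_of_mem_zero_one (hmeas i).aemeasurable (h01 i) t
    _ = exp (-t * ((1 + δ) * m) + δ * ∑ i, μ[Y i]) := by
        rw [← exp_sum, ← exp_add, ← Finset.mul_sum, hexp_t, add_sub_cancel_left]
    _ ≤ exp (-(δ ^ 2 * m) / (2 + δ)) := exp_le_exp.mpr hexponent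

end Chernoff

theorem refine_kpt_upper_tail_general
    {Ω : Type*} [MeasureSpace Ω]
    (n : ℕ) (hn : 1 ≤ n) (ε' ℓ OPT EIS KPT : ℝ)
    (hε' : 0 < ε')
    (hEISle : EIS ≤ OPT)
    (hKPT0 : 0 < KPT) (hKPTle : KPT ≤ OPT)
    (θ : ℕ)
    (hθ : (θ:ℝ) = ((2 + ε') * ℓ * n * Real.log n / ε' ^ 2) / KPT)
    (Y : Fin θ → Ω → ℝ)
    (hmeas : ∀ i, Measurable (Y i))
    (hindep : iIndepFun Y ℙ)
    (hBern : ∀ i ω, Y i ω = 0 ∨ Y i ω = 1)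
    (hmean : ∀ i, ∫ ω, Y i ω ∂ℙ = EIS / n) :
    (ℙ {ω | (1 + ε') * OPT < ((∑ i, Y i ω) / θ) * n}).toReal
      ≤ Real.exp (-(ε' ^ 2 * ((2 + ε') * ℓ * n * Real.log n / ε' ^ 2)) / ((2 + ε') * n)) ∧
    Real.exp (-(ε' ^ 2 * ((2 + ε') * ℓ * n * Real.log n / ε' ^ 2)) / ((2 + ε') * n))
      = (n:ℝ) ^ (-ℓ) := by
  have := hindep.isProbabilityMeasure
  have hn0 : (0:ℝ) < n := by exact_mod_cast hn
  have hθKPT : (θ:ℝ) * KPT = (2 + ε') * ℓ * n * Real.log n / ε' ^ 2 := by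
    rw [hθ]; field_simp
  have hmean_sum : ∑ i, ∫ ω, Y i ω ∂ℙ ≤ θ * OPT / n := by
    simp only [hmean, Finset.sum_const, Finset.card_univ, Fintype.card_fin, nsmul_eq_mul]
    rw [mul_div_assoc]
    gcongr
  have hevent : {ω | (1 + ε') * OPT < ((∑ i, Y i ω) / θ) * n}
      ⊆ {ω | (1 + ε') * (θ * OPT / n) ≤ ∑ i, Y i ω} := by
    intro ω hω
    obtain rfl | hθpos := Nat.eq_zero_or_pos θ
    · simp
    simp only [Set.mem_ofPred_eq, div_mul_eq_mul_div,
      lt_div_iff₀ (by positivity : (0:ℝ) < θ)] at hω ⊢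
    rw [mul_div_assoc', div_le_iff₀ hn0]
    linarith
  refine ⟨?_, ?_⟩
  · calc (ℙ {ω | (1 + ε') * OPT < ((∑ i, Y i ω) / θ) * n}).toReal
        ≤ (ℙ {ω | (1 + ε') * (θ * OPT / n) ≤ ∑ i, Y i ω}).toReal := measureReal_mono hevent
      _ ≤ exp (-(ε' ^ 2 * (θ * OPT / n)) / (2 + ε')) :=
        hindep.measureReal_one_add_mul_le_sum_le hmeas hBern hmean_sum hε'.le
      _ ≤ _ := by
        rw [← hθKPT, exp_le_exp, neg_div, neg_div, neg_le_neg_iff, mul_div_assoc', div_div,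
          mul_comm (n : ℝ)]
        gcongr
  · rw [rpow_def_of_pos hn0]
    congr 1
    field_simp

/-- Core of the refinement step (Lemma 9 / Lemma 3 of Tang–Xiao–Shi): `θ'` Bernoulli trials,
each with success probability `ρ' = E[I(S'_k)]/n ≤ OPT/n`, have empirical success fraction
`f`. If `θ' = λ'/KPT*` with `λ' = (2+ε')·ℓ·n·log n/(ε')²` and `KPT* ≤ OPT`, then
`Pr[f·n > (1+ε')·OPT] ≤ exp(-(ε')²·λ'/((2+ε')·n)) = n^{-ℓ}`. -/
theorem refine_kpt_upper_tail
    {Ω : Type*} [MeasureSpace Ω] [IsProbabilityMeasure (ℙ : Measure Ω)]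
    (n : ℕ) (hn : 1 ≤ n) (ε' ℓ OPT EIS KPT : ℝ)
    (hε' : 0 < ε') (hℓ : 0 < ℓ) (hOPT : 0 < OPT)
    (hEIS0 : 0 ≤ EIS) (hEISle : EIS ≤ OPT)
    (hKPT0 : 0 < KPT) (hKPTle : KPT ≤ OPT)
    (θ : ℕ)
    (hθ : (θ:ℝ) = ((2 + ε') * ℓ * n * Real.log n / ε' ^ 2) / KPT)
    (Y : Fin θ → Ω → ℝ)
    (hmeas : ∀ i, Measurable (Y i))
    (hindep : iIndepFun Y ℙ)
    (hBern : ∀ i ω, Y i ω = 0 ∨ Y i ω = 1)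
    (hmean : ∀ i, ∫ ω, Y i ω ∂ℙ = EIS / n) :
    (ℙ {ω | (1 + ε') * OPT < ((∑ i, Y i ω) / θ) * n}).toReal
      ≤ Real.exp (-(ε' ^ 2 * ((2 + ε') * ℓ * n * Real.log n / ε' ^ 2)) / ((2 + ε') * n)) ∧
    Real.exp (-(ε' ^ 2 * ((2 + ε') * ℓ * n * Real.log n / ε' ^ 2)) / ((2 + ε') * n))
      = (n:ℝ) ^ (-ℓ) :=
  refine_kpt_upper_tail_general n hn ε' ℓ OPT EIS KPT hε' hEISle hKPT0 hKPTle θ hθ Y hmeas hindep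
    hBern hmean
end

section
/- Suppose the greedy algorithm for maximum coverage selects, over k iterations, sets S_0 = ∅ ⊂ S_1 ⊂ … ⊂ S_k, where at each step the chosen node maximizes the estimated spread ξ, and suppose every estimate satisfies |ξ(S') − I(S')| ≤ (ε/(2k))·OPT for all sets S' considered. If f = I is monotone submodular with optimum OPT over size-k sets, then I(S_k) ≥ (1 − 1/e − ε)·OPT. -/
/-! Let `T` be an optimal `k`-set. By submodularity the marginal gains of the elements of `T` at
the current set `A` add up to at least `I T - I A`, so one of them gains at least `(I T - I A)/k`.
The noisy greedy choice loses at most `2c` against that element, where `c` is the uniform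
oracle error, so the gap `I T - I (S i)` shrinks by the factor `1 - 1/k` up to an additive `2c`
per step. After `k` steps the gap is at most `(1 - 1/k)^k · OPT + 2kc ≤ OPT/e + ε · OPT`. -/

open Finset

section Submodular

variable {V : Type*} [DecidableEq V] {I : Finset V → ℝ}

theorem sub_le_sum_marginal_of_submodular
    (hsub : ∀ (A B : Finset V) (v : V), A ⊆ B → I (insert v B) - I B ≤ I (insert v A) - I A)
    (A T : Finset V) : I (A ∪ T) - I A ≤ ∑ v ∈ T, (I (insert v A) - I A) := by
  induction T using Finset.induction_on with
  | empty => simp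
  | @insert v T hv ih =>
    rw [sum_insert hv, union_insert]
    linarith [hsub A (A ∪ T) v subset_union_left]

theorem exists_marginal_ge_of_submodular (hmono : ∀ A B : Finset V, A ⊆ B → I A ≤ I B)
    (hsub : ∀ (A B : Finset V) (v : V), A ⊆ B → I (insert v B) - I B ≤ I (insert v A) - I A)
    {T : Finset V} (hT : T.Nonempty) (A : Finset V) :
    ∃ w, (I T - I A) / #T ≤ I (insert w A) - I A := by
  have hsum : ∑ _ ∈ T, (I T - I A) / #T ≤ ∑ v ∈ T, (I (insert v A) - I A) := by
    rw [sum_const, nsmul_eq_mul, mul_div_cancel₀ _ (by simp [hT.ne_empty])]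
    linarith [hmono T (A ∪ T) subset_union_right, sub_le_sum_marginal_of_submodular hsub A T]
  obtain ⟨w, -, hw⟩ := exists_le_of_sum_le hT hsum
  exact ⟨w, hw⟩

end Submodular

theorem sub_two_mul_le_of_abs_sub_le_of_le {α : Type*} {f g : α → ℝ} {c : ℝ}
    (hfg : ∀ x, |g x - f x| ≤ c) {x y : α} (hyx : g y ≤ g x) : f y - 2 * c ≤ f x := by
  have hx := abs_le.mp (hfg x)
  have hy := abs_le.mp (hfg y)
  linarith [hx.1, hy.2]

theorem noisy_greedy_gap_step {V : Type*} [DecidableEq V] {I ξ : Finset V → ℝ} {c : ℝ}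
    (hmono : ∀ A B : Finset V, A ⊆ B → I A ≤ I B)
    (hsub : ∀ (A B : Finset V) (v : V), A ⊆ B → I (insert v B) - I B ≤ I (insert v A) - I A)
    (hξ : ∀ S, |ξ S - I S| ≤ c) {T : Finset V} (hT : T.Nonempty) {A : Finset V} {v : V}
    (hv : ∀ u, ξ (insert u A) ≤ ξ (insert v A)) :
    I T - I (insert v A) ≤ (1 - 1 / #T) * (I T - I A) + 2 * c := by
  obtain ⟨w, hw⟩ := exists_marginal_ge_of_submodular hmono hsub hT A
  have hvw := sub_two_mul_le_of_abs_sub_le_of_le hξ (hv w)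
  have hfactor : (1 - 1 / (#T : ℝ)) * (I T - I A) = I T - I A - (I T - I A) / #T := by ring
  linarith

theorem le_pow_mul_add_of_le_mul_add {d : ℕ → ℝ} {q b : ℝ} (hq0 : 0 ≤ q) (hq1 : q ≤ 1)
    (hb : 0 ≤ b) {n : ℕ} (h : ∀ i < n, d (i + 1) ≤ q * d i + b) :
    d n ≤ q ^ n * d 0 + n * b := by
  induction n with
  | zero => simp
  | succ n ih =>
    have ih' := mul_le_mul_of_nonneg_left (ih fun i hi => h i (by omega)) hq0
    have hqnb : q * (n * b) ≤ n * b := mul_le_of_le_one_left (by positivity) hq1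
    calc d (n + 1) ≤ q * d n + b := h n (by omega)
      _ ≤ q * (q ^ n * d 0 + n * b) + b := by linarith
      _ = q ^ (n + 1) * d 0 + q * (n * b) + b := by ring
      _ ≤ q ^ (n + 1) * d 0 + (n + 1 : ℕ) * b := by push_cast; linarith

theorem noisy_greedy_submodular_approx_general
    {V : Type*} [DecidableEq V]
    (I : Finset V → ℝ) (k : ℕ) (hk : 1 ≤ k)
    (hmono : ∀ A B : Finset V, A ⊆ B → I A ≤ I B)
    (hI0 : I ∅ = 0)
    (hsub : ∀ (A B : Finset V) (v : V), A ⊆ B →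
      I (insert v B) - I B ≤ I (insert v A) - I A)
    (OPT : ℝ) (hOPT : IsGreatest (I '' {S : Finset V | S.card = k}) OPT)
    (ε : ℝ)
    (ξ : Finset V → ℝ)
    (hξ : ∀ S : Finset V, |ξ S - I S| ≤ ε / (2 * k) * OPT)
    (S : ℕ → Finset V) (hS0 : S 0 = ∅)
    (hstep : ∀ i, 1 ≤ i → i ≤ k → ∃ v : V,
      S i = insert v (S (i - 1)) ∧
      ∀ u : V, ξ (insert u (S (i - 1))) ≤ ξ (insert v (S (i - 1)))) :
    (1 - 1 / Real.exp 1 - ε) * OPT ≤ I (S k) := by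
  obtain ⟨⟨T, hTcard, rfl⟩, -⟩ := hOPT
  replace hTcard : #T = k := hTcard
  have hT : T.Nonempty := card_pos.mp (hTcard ▸ hk)
  have hk1 : 1 / (k : ℝ) ≤ 1 := div_le_one_of_le₀ (by exact_mod_cast hk) k.cast_nonneg
  have hgap :
      I T - I (S k) ≤ (1 - 1 / k) ^ k * (I T - I (S 0)) + k * (2 * (ε / (2 * k) * I T)) :=
    le_pow_mul_add_of_le_mul_add (d := fun i => I T - I (S i)) (by linarith)
      (by simp) (by linarith [(abs_nonneg _).trans (hξ ∅)]) fun i hi => by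
        obtain ⟨v, hSv, hv⟩ := hstep (i + 1) (by omega) hi
        simp only [add_tsub_cancel_right] at hSv hv
        simpa only [hSv, hTcard] using noisy_greedy_gap_step hmono hsub hξ hT hv
  have hexp : (1 - 1 / (k : ℝ)) ^ k ≤ 1 / Real.exp 1 := by
    simpa [Real.exp_neg] using
      Real.one_sub_div_pow_le_exp_neg (n := k) (t := 1) (by exact_mod_cast hk)
  have hOPT0 : 0 ≤ I T := hI0 ▸ hmono ∅ T (empty_subset T)
  have hnoise : (k : ℝ) * (2 * (ε / (2 * k) * I T)) = ε * I T := by field_simp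
  rw [hS0, hI0, sub_zero, hnoise] at hgap
  nlinarith [mul_le_mul_of_nonneg_right hexp hOPT0]

/-- Deterministic statement underlying Lemma 9 of Tang–Xiao–Shi: noisy greedy on a monotone
submodular function `I` with `I ∅ = 0`, where at each of the `k` steps the node maximizing
the noisy estimate `ξ` is added, and every estimate satisfies
`|ξ(S') - I(S')| ≤ (ε/(2k))·OPT`, achieves `I(S_k) ≥ (1 - 1/e - ε)·OPT`, where `OPT` is the
maximum of `I` over size-`k` sets. -/
theorem noisy_greedy_submodular_approx
    {V : Type*} [DecidableEq V] [Fintype V]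
    (I : Finset V → ℝ) (k : ℕ) (hk : 1 ≤ k)
    (hmono : ∀ A B : Finset V, A ⊆ B → I A ≤ I B)
    (hI0 : I ∅ = 0)
    (hsub : ∀ (A B : Finset V) (v : V), A ⊆ B →
      I (insert v B) - I B ≤ I (insert v A) - I A)
    (OPT : ℝ) (hOPT : IsGreatest (I '' {S : Finset V | S.card = k}) OPT)
    (ε : ℝ) (hε0 : 0 < ε) (hε1 : ε < 1)
    (ξ : Finset V → ℝ)
    (hξ : ∀ S : Finset V, |ξ S - I S| ≤ ε / (2 * k) * OPT)
    (S : ℕ → Finset V) (hS0 : S 0 = ∅)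
    (hstep : ∀ i, 1 ≤ i → i ≤ k → ∃ v : V,
      S i = insert v (S (i - 1)) ∧
      ∀ u : V, ξ (insert u (S (i - 1))) ≤ ξ (insert v (S (i - 1)))) :
    (1 - 1 / Real.exp 1 - ε) * OPT ≤ I (S k) :=
  noisy_greedy_submodular_approx_general I k hk hmono hI0 hsub OPT hOPT ε ξ hξ S hS0 hstep
end

section
/- Under the triggering model, let g be the random subgraph of G obtained by sampling a triggering set T(v) for each node v independently from its triggering distribution and keeping only edges from nodes of T(v) into v. Fix a node set S and node v. Then the probability that S intersects the set of nodes that can reach v in g equals the probability that S, used as a seed set, activates v in the triggering-model propagation process on G. -/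
/-! For each fixed sample of triggering sets the two events coincide, so the probabilities agree
whatever the distribution of the sample. -/

open MeasureTheory ProbabilityTheory

/-- The set of nodes activated by timestamp `t+1` of the triggering-model propagation process
from seed set `S`, given sampled triggering sets: `trig v u = true` means `u` belongs to the
sampled triggering set of `v`; an inactive node `v` becomes active once its triggering set
contains an active node. -/
def trigActivated {V : Type*} (trig : V → V → Bool) (S : Set V) : ℕ → Set V
  | 0 => S
  | t + 1 => trigActivated trig S t ∪ {v | ∃ u ∈ trigActivated trig S t, trig v u = true}

section trigActivated

variable {V : Type*} (trig : V → V → Bool) (S : Set V)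

theorem exists_mem_trigActivated_of_reflTransGen {u w : V} (hu : u ∈ S)
    (huw : Relation.ReflTransGen (fun a b => trig b a = true) u w) :
    ∃ t, w ∈ trigActivated trig S t := by
  induction huw with
  | refl => exact ⟨0, hu⟩
  | tail _ hstep ih =>
    obtain ⟨t, ht⟩ := ih
    exact ⟨t + 1, Or.inr ⟨_, ht, hstep⟩⟩

theorem exists_reflTransGen_of_mem_trigActivated {t : ℕ} {w : V}
    (hw : w ∈ trigActivated trig S t) :
    ∃ u ∈ S, Relation.ReflTransGen (fun a b => trig b a = true) u w := by
  induction t generalizing w with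
  | zero => exact ⟨w, hw, .refl⟩
  | succ t ih =>
    rcases hw with hw | ⟨u, hu, hstep⟩
    · exact ih hw
    · obtain ⟨s, hs, hsu⟩ := ih hu
      exact ⟨s, hs, hsu.tail hstep⟩

theorem mem_iUnion_trigActivated_iff (w : V) :
    w ∈ ⋃ t, trigActivated trig S t ↔
      (S ∩ {u | Relation.ReflTransGen (fun a b => trig b a = true) u w}).Nonempty := by
  rw [Set.mem_iUnion]
  constructor
  · rintro ⟨t, ht⟩
    exact exists_reflTransGen_of_mem_trigActivated trig S ht
  · rintro ⟨u, hu, huw⟩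
    exact exists_mem_trigActivated_of_reflTransGen trig S hu huw

end trigActivated

theorem triggering_rr_set_eq_activation_general
    {V : Type*}
    (μ : Measure (V → V → Bool))
    (S : Set V) (v : V) :
    μ {trig | (S ∩ {u | Relation.ReflTransGen (fun a b => trig b a = true) u v}).Nonempty}
      = μ {trig | v ∈ ⋃ t, trigActivated trig S t} := by
  simp only [mem_iUnion_trigActivated_iff]

/-- Lemma 4 of Tang–Xiao–Shi: under the triggering model, let `g` be the random subgraph of
`G` obtained by sampling a triggering set for each node `v` independently from its triggering
distribution and keeping only the edges from nodes of the triggering set into `v`. For a fixed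
node set `S` and node `v`, the probability that `S` intersects the set of nodes that can reach
`v` in `g` equals the probability that `S`, used as a seed set, activates `v` in the
triggering-model propagation process on `G`. -/
theorem triggering_rr_set_eq_activation
    {V : Type*} [Fintype V]
    (μ : Measure (V → V → Bool)) [IsProbabilityMeasure μ]
    (hindep : iIndepFun
      (fun (v : V) (trig : V → V → Bool) => trig v) μ)
    (S : Set V) (v : V) :
    μ {trig | (S ∩ {u | Relation.ReflTransGen (fun a b => trig b a = true) u v}).Nonempty}
      = μ {trig | v ∈ ⋃ t, trigActivated trig S t} :=
  triggering_rr_set_eq_activation_general μ S v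
end
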